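/- The correlated equilibrium polytope of the Bach or Stravinsky game, namely the set of points (p_{00}, p_{01}, p_{10}, p_{11}) in the 3-simplex satisfying 3p_{00} - 2p_{01} ≥ 0, 2p_{11} - 3p_{10} ≥ 0, 2p_{00} - 3p_{10} ≥ 0, and 3p_{11} - 2p_{01} ≥ 0, equals the convex hull of the five points (1,0,0,0), (0,0,0,1), (2/7,3/7,0,2/7), (3/8,0,1/4,3/8), and (6/25,9/25,4/25,6/25). -/

import Mathlib

/-!
Write `v = (p₀₀, p₀₁, p₁₀, p₁₁)`. Giving the fully mixed vertex `(6/25, 9/25, 4/25, 6/25)` a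
weight `E`, the rest of the off-diagonal mass can only be carried by `(2/7, 3/7, 0, 2/7)` (for
`p₀₁`) and `(3/8, 0, 1/4, 3/8)` (for `p₁₀`), and the two pure vertices take what is left on the
diagonal. This is an exact decomposition of `v` for every `E`; the equilibrium inequalities give
`(3/2) p₁₀ ≤ min p₀₀ p₁₁` and `(2/3) p₀₁ ≤ min p₀₀ p₁₁`, which is exactly what is needed to
choose `E` with all five weights nonnegative.
-/

theorem convex_setOf_mul_sub_mul_nonneg {ι : Type*} (a b : ℝ) (i j : ι) :
    Convex ℝ {v : ι → ℝ | a * v i - b * v j ≥ 0} :=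
  convex_halfSpace_ge (a • LinearMap.proj (R := ℝ) (φ := fun _ : ι => ℝ) i -
    b • LinearMap.proj j).isLinear 0

namespace BachStravinsky

noncomputable section

def cePolytope : Set (Fin 4 → ℝ) :=
  {v | (∀ i, 0 ≤ v i) ∧ v 0 + v 1 + v 2 + v 3 = 1 ∧
      3 * v 0 - 2 * v 1 ≥ 0 ∧ 2 * v 3 - 3 * v 2 ≥ 0 ∧
      2 * v 0 - 3 * v 2 ≥ 0 ∧ 3 * v 3 - 2 * v 1 ≥ 0}

def vertices : Set (Fin 4 → ℝ) :=
  {![1, 0, 0, 0], ![0, 0, 0, 1], ![2/7, 3/7, 0, 2/7], ![3/8, 0, 1/4, 3/8],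
    (![6/25, 9/25, 4/25, 6/25] : Fin 4 → ℝ)}

def vertex : Fin 5 → Fin 4 → ℝ :=
  ![![1, 0, 0, 0], ![0, 0, 0, 1], ![2/7, 3/7, 0, 2/7], ![3/8, 0, 1/4, 3/8],
    ![6/25, 9/25, 4/25, 6/25]]

theorem vertex_mem_vertices (i : Fin 5) : vertex i ∈ vertices := by
  fin_cases i <;> simp [vertex, vertices]

theorem cePolytope_eq_inter :
    cePolytope = stdSimplex ℝ (Fin 4) ∩ {v | 3 * v 0 - 2 * v 1 ≥ 0} ∩
      {v | 2 * v 3 - 3 * v 2 ≥ 0} ∩ {v | 2 * v 0 - 3 * v 2 ≥ 0} ∩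
      {v | 3 * v 3 - 2 * v 1 ≥ 0} := by
  ext v
  simp only [cePolytope, stdSimplex, Fin.sum_univ_four, Set.mem_inter_iff, Set.mem_ofPred_eq]
  tauto

theorem convex_cePolytope : Convex ℝ cePolytope := by
  rw [cePolytope_eq_inter]
  refine (((convex_stdSimplex ℝ (Fin 4)).inter ?_).inter ?_).inter ?_ |>.inter ?_ <;>
    exact convex_setOf_mul_sub_mul_nonneg _ _ _ _

theorem vertices_subset_cePolytope : vertices ⊆ cePolytope := by
  rintro p (rfl | rfl | rfl | rfl | rfl) <;>
    norm_num [cePolytope, Fin.forall_fin_succ, Matrix.cons_val_two, Matrix.cons_val_three]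

def weight (v : Fin 4 → ℝ) (E : ℝ) : Fin 5 → ℝ :=
  ![v 0 - (2/3 * v 1 + 3/2 * v 2 - 6/25 * E), v 3 - (2/3 * v 1 + 3/2 * v 2 - 6/25 * E),
    7/3 * (v 1 - 9/25 * E), 4 * (v 2 - 4/25 * E), E]

theorem sum_weight_smul_vertex (v : Fin 4 → ℝ) (E : ℝ) :
    ∑ i, weight v E i • vertex i = v := by
  funext j
  fin_cases j <;> simp [Fin.sum_univ_five, weight, vertex] <;> ring

theorem sum_weight (v : Fin 4 → ℝ) (E : ℝ) : ∑ i, weight v E i = v 0 + v 1 + v 2 + v 3 := by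
  simp [Fin.sum_univ_five, weight]
  ring

theorem exists_weight_nonneg {v : Fin 4 → ℝ} (hv : v ∈ cePolytope) :
    ∃ E, ∀ i, 0 ≤ weight v E i := by
  obtain ⟨hpos, -, h₁, h₂, h₃, h₄⟩ := hv
  have hv₁ := hpos 1
  have hv₂ := hpos 2
  set E := max 0 (max (25/6 * (2/3 * v 1 + 3/2 * v 2 - v 0))
    (25/6 * (2/3 * v 1 + 3/2 * v 2 - v 3)))
  have hE₀ : 0 ≤ E := le_max_left _ _
  have hE₁ : 25/6 * (2/3 * v 1 + 3/2 * v 2 - v 0) ≤ E :=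
    (le_max_left _ _).trans (le_max_right _ _)
  have hE₂ : 25/6 * (2/3 * v 1 + 3/2 * v 2 - v 3) ≤ E :=
    (le_max_right _ _).trans (le_max_right _ _)
  have hE_le_v₁ : E ≤ 25/9 * v 1 := max_le (by linarith) (max_le (by linarith) (by linarith))
  have hE_le_v₂ : E ≤ 25/4 * v 2 := max_le (by linarith) (max_le (by linarith) (by linarith))
  refine ⟨E, fun i => ?_⟩
  fin_cases i <;> simp [weight] <;> linarith

theorem cePolytope_subset_convexHull : cePolytope ⊆ convexHull ℝ vertices := by
  intro v hv
  obtain ⟨E, hE⟩ := exists_weight_nonneg hv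
  rw [← sum_weight_smul_vertex v E]
  exact (convex_convexHull ℝ _).sum_mem (fun i _ => hE i) ((sum_weight v E).trans hv.2.1)
    fun i _ => subset_convexHull ℝ _ (vertex_mem_vertices i)

end

end BachStravinsky

/-- The correlated equilibrium polytope of the Bach or Stravinsky game equals the convex
hull of its five vertices. Coordinates are ordered (p₀₀, p₀₁, p₁₀, p₁₁). -/
theorem stmt19 :
    {v : Fin 4 → ℝ | (∀ i, 0 ≤ v i) ∧ v 0 + v 1 + v 2 + v 3 = 1 ∧
      3 * v 0 - 2 * v 1 ≥ 0 ∧ 2 * v 3 - 3 * v 2 ≥ 0 ∧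
      2 * v 0 - 3 * v 2 ≥ 0 ∧ 3 * v 3 - 2 * v 1 ≥ 0} =
    convexHull ℝ
      {![1, 0, 0, 0], ![0, 0, 0, 1], ![2/7, 3/7, 0, 2/7], ![3/8, 0, 1/4, 3/8],
       (![6/25, 9/25, 4/25, 6/25] : Fin 4 → ℝ)} :=
  BachStravinsky.cePolytope_subset_convexHull.antisymm <|
    convexHull_min BachStravinsky.vertices_subset_cePolytope BachStravinsky.convex_cePolytope
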